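/- arXiv:2201.12166 — 9 statements merged into one kernel-verified Lean document; each statement's English description precedes it below -/
import Mathlib

section
/- Let S be a commutative semiring, n ≥ 1, and let M be one of the monoids M_n(S), UT_n(S), or U_n(S). If X ∈ M satisfies X J I_n (i.e., X generates the same two-sided ideal as the identity), then X is a unit in M. -/
/-- The monoid of upper triangular `n × n` matrices over `S`. -/
def UTsub (n : ℕ) (S : Type*) [CommSemiring S] : Submonoid (Matrix (Fin n) (Fin n) S) where
  carrier := {M | ∀ i j : Fin n, j < i → M i j = 0}
  one_mem' := by
    intro i j h
    exact Matrix.one_apply_ne (by exact fun e => absurd e.symm (ne_of_lt h))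
  mul_mem' := by
    intro M N hM hN i j hij
    show (M * N) i j = 0
    rw [Matrix.mul_apply]
    apply Finset.sum_eq_zero
    intro k _
    rcases lt_or_ge k i with h | h
    · rw [hM i k h, zero_mul]
    · rw [hN k j (lt_of_lt_of_le hij h), mul_zero]

/-- The monoid of unitriangular `n × n` matrices over `S`. -/
def Usub (n : ℕ) (S : Type*) [CommSemiring S] : Submonoid (Matrix (Fin n) (Fin n) S) where
  carrier := {M | (∀ i j : Fin n, j < i → M i j = 0) ∧ ∀ i : Fin n, M i i = 1}
  one_mem' := by
    constructor
    · intro i j h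
      exact Matrix.one_apply_ne (by exact fun e => absurd e.symm (ne_of_lt h))
    · intro i; exact Matrix.one_apply_eq i
  mul_mem' := by
    intro M N hM hN
    refine ⟨(UTsub _ _).mul_mem' hM.1 hN.1, ?_⟩
    intro i
    show (M * N) i i = 1
    rw [Matrix.mul_apply]
    rw [Finset.sum_eq_single i]
    · rw [hM.2 i, hN.2 i, one_mul]
    · intro k _ hk
      rcases lt_or_gt_of_ne hk with h | h
      · rw [hM.1 i k h, zero_mul]
      · rw [hN.1 k i h, mul_zero]
    · intro h; exact absurd (Finset.mem_univ i) h

theorem IsUnit.of_mul_mul_eq_one {M : Type*} [Monoid M] [IsDedekindFiniteMonoid M] {a x b : M}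
    (h : a * x * b = 1) : IsUnit x :=
  isUnit_of_mul_isUnit_right (IsUnit.of_mul_eq_one b h)

/- All three monoids are Dedekind-finite: for square matrices over a commutative semiring,
`A * B = 1 → B * A = 1` (Reutenauer–Straubing, `Matrix.instIsStablyFiniteRingOfCommSemiring`), and
submonoids inherit this. -/
/-- If `X` is J-related to the identity in `M_n(S)`, `UT_n(S)` or `U_n(S)` over a
commutative semiring `S`, then `X` is a unit in that monoid. -/
theorem stmt3 (n : ℕ) (S : Type*) [CommSemiring S] :
    (∀ X : Matrix (Fin n) (Fin n) S, (∃ A B, A * X * B = 1) → IsUnit X) ∧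
    (∀ X : (UTsub n S), (∃ A B, A * X * B = 1) → IsUnit X) ∧
    (∀ X : (Usub n S), (∃ A B, A * X * B = 1) → IsUnit X) :=
  ⟨fun _ ⟨_, _, h⟩ => .of_mul_mul_eq_one h, fun _ ⟨_, _, h⟩ => .of_mul_mul_eq_one h,
    fun _ ⟨_, _, h⟩ => .of_mul_mul_eq_one h⟩
end

section
/- Let S be a commutative semiring and A, X, B ∈ M_n(S) with AXB = I_n. Then XBA = BAX = I_n; in particular X is invertible in M_n(S). -/
theorem mul_mul_eq_one_rotate {M : Type*} [Monoid M] [IsDedekindFiniteMonoid M] {a x b : M}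
    (h : a * x * b = 1) : x * (b * a) = 1 ∧ b * a * x = 1 := by
  constructor
  · rw [← mul_assoc]
    exact mul_eq_one_symm (by rwa [← mul_assoc])
  · rw [mul_assoc]
    exact mul_eq_one_symm h

/-- Over a commutative semiring, `A * X * B = 1` implies `X * (B * A) = (B * A) * X = 1`;
in particular `X` is invertible. -/
theorem stmt4 {n : ℕ} {S : Type*} [CommSemiring S] (A X B : Matrix (Fin n) (Fin n) S)
    (h : A * X * B = 1) :
    X * (B * A) = 1 ∧ (B * A) * X = 1 ∧ IsUnit X := by
  -- Square matrices over a commutative semiring are Dedekind-finite (Reutenauer–Straubing):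
  -- the instance is `Matrix.instIsStablyFiniteRingOfCommSemiring`.
  obtain ⟨hXBA, hBAX⟩ := mul_mul_eq_one_rotate h
  exact ⟨hXBA, hBAX, isUnit_iff_exists.mpr ⟨B * A, hXBA, hBAX⟩⟩
end

section
/- Let S be a commutative semiring and n ≥ 1. A matrix X ∈ UT_n(S) is invertible in UT_n(S) if and only if X_{ii} is a multiplicative unit of S for all 1 ≤ i ≤ n and X_{ij} is additively invertible in S for all 1 ≤ i < j ≤ n. -/
/-!
Upper triangular matrices form a subsemiring of all matrices, and the argument takes place
there. If `X * Y = 1 = Y * X`, the diagonal entries give `X i i * Y i i = 1 = Y i i * X i i`,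
and for `i < j` the entry `(X * Y) i j = 0` is a sum containing `X i j * Y j j`; a summand of a
vanishing sum is additively invertible, hence so is `X i j = (X i j * Y j j) * X j j`.

Conversely, write `X = D * (1 + a)` with `D` the diagonal part of `X` and `a = D⁻¹ * U`, `U` the
strictly upper part. Negating the entries of `U` gives `b = D⁻¹ * V` with `a + b = 0` and `b`
strictly upper triangular, so `b ^ n = 0`, and the geometric series `∑ k < n, b ^ k` inverts
`1 + a` without any subtraction.
-/

open Finset Matrix

theorem isUnit_one_add_of_add_eq_zero {R : Type*} [Semiring R] {a b : R} (hab : a + b = 0)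
    (hb : IsNilpotent b) : IsUnit (1 + a) := by
  obtain ⟨n, hn⟩ := hb
  set s := ∑ k ∈ range n, b ^ k
  have hs : b * s + 1 = s := by rw [← geom_sum_succ, geom_sum_succ', hn, zero_add]
  have hbs : b * s = s * b := (Commute.sum_right _ _ _ fun k _ => Commute.self_pow b k).eq
  have hba : b + a = 0 := by rw [add_comm, hab]
  refine isUnit_iff_exists.mpr ⟨s, ?_, ?_⟩
  · calc (1 + a) * s = (b + a) * s + 1 := by rw [add_mul, one_mul, add_mul, add_right_comm, hs]
      _ = 1 := by rw [hba, zero_mul, zero_add]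
  · calc s * (1 + a) = s * (b + a) + 1 := by
          rw [mul_add, mul_one, mul_add, ← hbs, add_right_comm, hs]
      _ = 1 := by rw [hba, mul_zero, zero_add]

namespace Matrix

variable {m R : Type*}

def IsStrictlyUpperTriangular [Zero R] [LE m] (M : Matrix m m R) : Prop :=
  ∀ ⦃i j⦄, j ≤ i → M i j = 0

section LinearOrder

variable [LinearOrder m] [Fintype m] [Semiring R] {A B : Matrix m m R}

theorem IsUpperTriangular.mul_apply_self (hA : A.IsUpperTriangular) (hB : B.IsUpperTriangular)
    (i : m) : (A * B) i i = A i i * B i i := by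
  rw [mul_apply, sum_eq_single i]
  · intro k _ hki
    rcases hki.lt_or_gt with hk | hk
    · rw [hA hk, zero_mul]
    · rw [hB hk, mul_zero]
  · exact fun h => (h (mem_univ i)).elim

theorem IsUpperTriangular.mul_isStrictlyUpperTriangular (hA : A.IsUpperTriangular)
    (hB : B.IsStrictlyUpperTriangular) : (A * B).IsStrictlyUpperTriangular := by
  intro i j hji
  rw [mul_apply]
  refine sum_eq_zero fun k _ => ?_
  rcases lt_or_ge k i with hk | hk
  · rw [hA hk, zero_mul]
  · rw [hB (hji.trans hk), mul_zero]

end LinearOrder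

theorem isAddUnit_mul_apply_of_mul_apply_eq_zero [Fintype m] [NonUnitalNonAssocSemiring R]
    {A B : Matrix m m R} {i j : m} (h : (A * B) i j = 0) (k : m) : IsAddUnit (A i k * B k j) := by
  rw [mul_apply] at h
  exact IsAddUnit.sum_iff.mp (h ▸ isAddUnit_zero) k (mem_univ k)

namespace IsStrictlyUpperTriangular

variable {n : ℕ} [Semiring R] {M : Matrix (Fin n) (Fin n) R}

theorem pow_apply_eq_zero (hM : M.IsStrictlyUpperTriangular) (k : ℕ) {i j : Fin n}
    (hij : (j : ℕ) < i + k) : (M ^ k) i j = 0 := by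
  induction k generalizing i with
  | zero => exact one_apply_ne (by rintro rfl; omega)
  | succ k ih =>
    rw [pow_succ', mul_apply]
    refine sum_eq_zero fun l _ => ?_
    rcases le_or_gt l i with hl | hl
    · rw [hM hl, zero_mul]
    · rw [ih (by simp only [Fin.lt_def] at hl; omega), mul_zero]

theorem pow_eq_zero (hM : M.IsStrictlyUpperTriangular) : M ^ n = 0 := by
  ext i j
  exact hM.pow_apply_eq_zero n (by omega)

end IsStrictlyUpperTriangular

section UpperTriangular

variable [Semiring R]

theorem isUnit_diag_and_isAddUnit_of_isUnit [Fintype m] [LinearOrder m]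
    {X : blockTriangularSubsemiring R (id : m → m)} (hX : IsUnit X) :
    (∀ i, IsUnit ((X : Matrix m m R) i i)) ∧
      ∀ i j, i < j → IsAddUnit ((X : Matrix m m R) i j) := by
  obtain ⟨⟨⟨A, hA⟩, ⟨B, hB⟩, hAB, hBA⟩, rfl⟩ := hX
  replace hAB : A * B = 1 := congrArg Subtype.val hAB
  replace hBA : B * A = 1 := congrArg Subtype.val hBA
  have hAB_diag (i : m) : A i i * B i i = 1 := by
    rw [← IsUpperTriangular.mul_apply_self hA hB, hAB, one_apply_eq]
  have hBA_diag (i : m) : B i i * A i i = 1 := by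
    rw [← IsUpperTriangular.mul_apply_self hB hA, hBA, one_apply_eq]
  refine ⟨fun i => isUnit_iff_exists.mpr ⟨B i i, hAB_diag i, hBA_diag i⟩, fun i j hij => ?_⟩
  have hAB_ij : (A * B) i j = 0 := by rw [hAB, one_apply_ne hij.ne]
  have h := (isAddUnit_mul_apply_of_mul_apply_eq_zero hAB_ij j).mul_right (A j j)
  rwa [mul_assoc, hBA_diag, mul_one] at h

theorem isUnit_of_isUnit_diag_of_isAddUnit {n : ℕ}
    {X : blockTriangularSubsemiring R (id : Fin n → Fin n)}
    (hd : ∀ i, IsUnit ((X : Matrix (Fin n) (Fin n) R) i i))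
    (hu : ∀ i j, i < j → IsAddUnit ((X : Matrix (Fin n) (Fin n) R) i j)) : IsUnit X := by
  obtain ⟨A, hA⟩ := X
  let D : blockTriangularSubsemiring R id :=
    ⟨diagonal fun i => A i i, blockTriangular_diagonal _⟩
  have hD : IsUnit D := (Pi.isUnit_iff.mpr hd).map
    ((diagonalRingHom (Fin n) R).codRestrict _ fun d => blockTriangular_diagonal d)
  let U : blockTriangularSubsemiring R id :=
    ⟨of fun i j => if i < j then A i j else 0, fun _ _ h => if_neg (lt_asymm h)⟩
  let V : Matrix (Fin n) (Fin n) R :=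
    of fun i j => if h : i < j then ((-(hu i j h).addUnit : AddUnits R) : R) else 0
  have hV : V.IsStrictlyUpperTriangular := fun _ _ h => dif_neg (not_lt.mpr h)
  let V' : blockTriangularSubsemiring R id := ⟨V, fun _ _ h => hV h.le⟩
  have hUV : U + V' = 0 := by
    refine Subtype.ext <| ext fun i j => ?_
    by_cases h : i < j <;> simp [U, V', V, h]
  have hX : ⟨A, hA⟩ = D * (1 + ↑hD.unit⁻¹ * U) := by
    rw [mul_add, mul_one, ← mul_assoc, hD.mul_val_inv, one_mul]
    refine Subtype.ext <| ext fun i j => ?_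
    rcases lt_trichotomy i j with h | rfl | h
    · simp [D, U, h, h.ne]
    · simp [D, U]
    · simp [D, U, h.ne', lt_asymm h, hA h]
  rw [hX]
  refine hD.mul (isUnit_one_add_of_add_eq_zero (b := ↑hD.unit⁻¹ * V')
    (by rw [← mul_add, hUV, mul_zero]) ⟨n, Subtype.ext ?_⟩)
  simpa using (IsUpperTriangular.mul_isStrictlyUpperTriangular hD.unit⁻¹.val.2 hV).pow_eq_zero

end UpperTriangular

end Matrix

def UTsub.equivBlockTriangularSubsemiring (n : ℕ) (S : Type*) [CommSemiring S] :
    UTsub n S ≃* blockTriangularSubsemiring S (id : Fin n → Fin n) where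
  toFun X := ⟨X, fun _ _ h => X.2 _ _ h⟩
  invFun X := ⟨X, fun _ _ h => X.2 h⟩
  map_mul' _ _ := rfl

/-- An upper triangular matrix over a commutative semiring is invertible in `UT_n(S)`
iff its diagonal entries are units and its strictly upper entries are additively
invertible. -/
theorem stmt5 (n : ℕ) (S : Type*) [CommSemiring S] (X : UTsub n S) :
    IsUnit X ↔
      (∀ i : Fin n, IsUnit ((X : Matrix (Fin n) (Fin n) S) i i)) ∧
      (∀ i j : Fin n, i < j → IsAddUnit ((X : Matrix (Fin n) (Fin n) S) i j)) :=
  (MulEquiv.isUnit_map (UTsub.equivBlockTriangularSubsemiring n S)).symm.trans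
    ⟨isUnit_diag_and_isAddUnit_of_isUnit, fun h => isUnit_of_isUnit_diag_of_isAddUnit h.1 h.2⟩
end

section
/- Let S be an anti-negative commutative semiring. Then the group of units of UT_n(S) consists exactly of the diagonal matrices whose diagonal entries are units of S, and hence is isomorphic to the direct product U(S)^n. -/
/-!
Taking diagonals is multiplicative on upper triangular matrices, so a unit `X` with inverse `Y`
has unit diagonal. Anti-negativity says that `0` is the only additive unit, so a vanishing sum
has vanishing summands: for `i < j`, `0 = (X * Y) i j` yields `X i j * Y j j = 0`, and since
`Y j j` is invertible, `X i j = 0`. Hence the units are the diagonal matrices over `Sˣ`, and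
the diagonal map identifies the unit group with `(Fin n → S)ˣ ≃* (Fin n → Sˣ)`.
-/

lemma subsingleton_addUnits_of_add_eq_zero {M : Type*} [AddMonoid M]
    (h : ∀ x y : M, x + y = 0 → x = 0 ∧ y = 0) : Subsingleton (AddUnits M) :=
  Subsingleton.addUnits_of_isAddUnit fun _ ha ↦
    let ⟨_, hab⟩ := ha.exists_neg
    (h _ _ hab).1

namespace Matrix.IsUpperTriangular

variable {m R : Type*} [Fintype m] [LinearOrder m] {M N : Matrix m m R}

lemma mul_apply_self_s6 [NonUnitalNonAssocSemiring R] (hM : M.IsUpperTriangular)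
    (hN : N.IsUpperTriangular) (i : m) : (M * N) i i = M i i * N i i := by
  rw [mul_apply, Finset.sum_eq_single i]
  · intro k _ hk
    rcases lt_or_gt_of_ne hk with h | h
    · rw [hM h, zero_mul]
    · rw [hN h, mul_zero]
  · exact fun h ↦ absurd (Finset.mem_univ i) h

lemma isDiag_of_mul_eq_one [Semiring R] [Subsingleton (AddUnits R)] [DecidableEq m]
    (hM : M.IsUpperTriangular) (hN : N.IsUpperTriangular) (hMN : M * N = 1) (hNM : N * M = 1) :
    M.IsDiag := by
  intro i j hij
  rcases lt_or_gt_of_ne hij with h | h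
  · have hsum : ∑ k, M i k * N k j = 0 := by rw [← mul_apply, hMN, one_apply_ne hij]
    have hMN_ij : M i j * N j j = 0 :=
      Finset.sum_eq_zero_iff.mp hsum j (Finset.mem_univ j)
    have hNM_jj : N j j * M j j = 1 := by rw [← hN.mul_apply_self_s6 hM, hNM, one_apply_eq]
    calc M i j = M i j * N j j * M j j := by rw [mul_assoc, hNM_jj, mul_one]
      _ = 0 := by rw [hMN_ij, zero_mul]
  · exact hM h

end Matrix.IsUpperTriangular

namespace UTsub

variable {n : ℕ} {S : Type*} [CommSemiring S]

lemma mem_iff {M : Matrix (Fin n) (Fin n) S} : M ∈ UTsub n S ↔ M.IsUpperTriangular :=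
  ⟨fun h _ _ ↦ h _ _, fun h _ _ ↦ @h _ _⟩

lemma isUpperTriangular (X : UTsub n S) : (X : Matrix (Fin n) (Fin n) S).IsUpperTriangular :=
  mem_iff.mp X.2

def diagHom : UTsub n S →* (Fin n → S) where
  toFun X := Matrix.diag (X : Matrix (Fin n) (Fin n) S)
  map_one' := funext Matrix.one_apply_eq
  map_mul' X Y := funext ((isUpperTriangular X).mul_apply_self_s6 (isUpperTriangular Y))

def diagonalHom : (Fin n → S) →* UTsub n S :=
  (Matrix.diagonalRingHom (Fin n) S).toMonoidHom.codRestrict (UTsub n S)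
    fun d ↦ mem_iff.mpr (Matrix.blockTriangular_diagonal d)

lemma diagHom_diagonalHom (d : Fin n → S) : diagHom (diagonalHom d) = d :=
  funext fun i ↦ Matrix.diagonal_apply_eq d i

lemma diagonalHom_diagHom {X : UTsub n S} (hX : (X : Matrix (Fin n) (Fin n) S).IsDiag) :
    diagonalHom (diagHom X) = X :=
  Subtype.ext hX.diagonal_diag

variable [Subsingleton (AddUnits S)]

lemma isDiag_of_isUnit {X : UTsub n S} (hX : IsUnit X) : (X : Matrix (Fin n) (Fin n) S).IsDiag := by
  obtain ⟨u, rfl⟩ := hX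
  exact (isUpperTriangular u.val).isDiag_of_mul_eq_one (isUpperTriangular u⁻¹.val)
    (congrArg Subtype.val u.mul_inv) (congrArg Subtype.val u.inv_mul)

lemma isUnit_iff {X : UTsub n S} :
    IsUnit X ↔ (X : Matrix (Fin n) (Fin n) S).IsDiag ∧
      ∀ i, IsUnit ((X : Matrix (Fin n) (Fin n) S) i i) := by
  refine ⟨fun hX ↦ ⟨isDiag_of_isUnit hX, Pi.isUnit_iff.mp (hX.map diagHom)⟩, ?_⟩
  rintro ⟨hdiag, hunit⟩
  rw [← diagonalHom_diagHom hdiag]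
  exact (Pi.isUnit_iff.mpr hunit).map diagonalHom

def unitsEquiv : (UTsub n S)ˣ ≃* (Fin n → S)ˣ where
  toFun := Units.map (diagHom : UTsub n S →* _)
  invFun := Units.map (diagonalHom : _ →* UTsub n S)
  left_inv u := Units.ext <| diagonalHom_diagHom (isDiag_of_isUnit u.isUnit)
  right_inv d := Units.ext <| diagHom_diagonalHom (d : Fin n → S)
  map_mul' := map_mul _

end UTsub

/-- Over an anti-negative commutative semiring, the units of `UT_n(S)` are exactly the
diagonal matrices with unit diagonal entries, and the group of units is isomorphic to
`U(S)^n`. -/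
theorem stmt6 (n : ℕ) (S : Type*) [CommSemiring S]
    (hanti : ∀ x y : S, x + y = 0 → x = 0 ∧ y = 0) :
    (∀ X : UTsub n S, IsUnit X ↔
      ((∀ i j : Fin n, i ≠ j → (X : Matrix (Fin n) (Fin n) S) i j = 0) ∧
       (∀ i : Fin n, IsUnit ((X : Matrix (Fin n) (Fin n) S) i i)))) ∧
    Nonempty ((UTsub n S)ˣ ≃* (Fin n → Sˣ)) := by
  have := subsingleton_addUnits_of_add_eq_zero hanti
  exact ⟨fun X ↦ UTsub.isUnit_iff, ⟨UTsub.unitsEquiv.trans MulEquiv.piUnits⟩⟩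
end

section
/- Let m ≥ 1 and let X = {x_1, …, x_m} be a minimal group generating set for Z^m. Then X ∪ {x_0}, where x_0 = x_1^{-1} ⋯ x_m^{-1}, is a minimal semigroup generating set for Z^m; i.e., Z^m is generated as a semigroup by these m+1 elements and cannot be generated as a semigroup by m elements. -/
/-! `x_0 + x_1 + ⋯ + x_m = 0` makes every `-x_j` a sum of the other `x_i`, so the monoid generated
by `x_0, …, x_m` is the group generated by `x_1, …, x_m`. A monoid generating set of `ℤ^m` also
generates it as a group, so it has at least `m` elements; if it had exactly `m`, they would form a
`ℤ`-basis `y_1, …, y_m`, and the coordinate along `y_1` would be nonnegative on the monoid they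
generate but equal to `-1` at `-y_1`. -/

open Module

theorem AddSubmonoid.closure_range_union_neg_sum {ι G : Type*} [Fintype ι] [AddCommGroup G]
    (x : ι → G) :
    AddSubmonoid.closure (Set.range x ∪ {-(∑ i, x i)}) =
      (AddSubgroup.closure (Set.range x)).toAddSubmonoid := by
  classical
  set M := AddSubmonoid.closure (Set.range x ∪ {-(∑ i, x i)})
  have hx : ∀ j, x j ∈ M := fun j => AddSubmonoid.subset_closure (Or.inl ⟨j, rfl⟩)
  have hneg_sum : -(∑ i, x i) ∈ M := AddSubmonoid.subset_closure (Or.inr rfl)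
  have hneg : ∀ j, -x j ∈ M := fun j => by
    have hsplit : -(∑ i, x i) + ∑ i ∈ Finset.univ.erase j, x i = -x j := by
      rw [← Finset.add_sum_erase Finset.univ x (Finset.mem_univ j)]; abel
    exact hsplit ▸ M.add_mem hneg_sum (M.sum_mem fun i _ => hx i)
  refine le_antisymm (AddSubmonoid.closure_le.mpr ?_) ?_
  · rintro _ (⟨j, rfl⟩ | rfl)
    · exact AddSubgroup.subset_closure ⟨j, rfl⟩
    · exact (AddSubgroup.closure _).neg_mem
        (_root_.sum_mem fun i _ => AddSubgroup.subset_closure ⟨i, rfl⟩)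
  · rw [AddSubgroup.closure_toAddSubmonoid, AddSubmonoid.closure_le]
    rintro g (⟨j, rfl⟩ | ⟨j, hj⟩)
    · exact hx j
    · rw [← neg_neg g, ← hj]
      exact hneg j

namespace Module.Basis

variable {ι R M : Type*} [Ring R] [PartialOrder R] [IsOrderedRing R] [AddCommGroup M] [Module R M]

theorem coord_nonneg_of_mem_addSubmonoidClosure_range (b : Basis ι R M) (i : ι) {v : M}
    (hv : v ∈ AddSubmonoid.closure (Set.range b)) : 0 ≤ b.coord i v := by
  induction hv using AddSubmonoid.closure_induction with
  | mem _ hb =>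
    obtain ⟨j, rfl⟩ := hb
    classical
    rw [coord_apply, repr_self, Finsupp.single_apply]
    split_ifs <;> simp
  | zero => simp
  | add _ _ _ _ h₁ h₂ => rw [map_add]; exact add_nonneg h₁ h₂

theorem neg_notMem_addSubmonoidClosure_range [Nontrivial R] (b : Basis ι R M) (i : ι) :
    -b i ∉ AddSubmonoid.closure (Set.range b) := fun h => by
  have := b.coord_nonneg_of_mem_addSubmonoidClosure_range i h
  simp only [map_neg, coord_apply, repr_self, Finsupp.single_eq_same, neg_nonneg] at this
  exact this.not_gt zero_lt_one

end Module.Basis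

theorem Finset.addSubmonoidClosure_ne_top_of_card_eq_finrank {R M : Type*} [CommRing R]
    [PartialOrder R] [IsOrderedRing R] [Nontrivial R] [AddCommGroup M] [Module R M]
    {Y : Finset M} (hne : Y.Nonempty) (hspan : ⊤ ≤ Submodule.span R (Y : Set M))
    (hcard : Y.card = finrank R M) :
    AddSubmonoid.closure (Y : Set M) ≠ ⊤ := fun htop => by
  obtain ⟨y, hy⟩ := hne
  let b := finsetBasisOfTopLeSpanOfCardEqFinrank hspan hcard
  have hb : Set.range b = Y := by
    simp [b, finsetBasisOfTopLeSpanOfCardEqFinrank]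
  refine b.neg_notMem_addSubmonoidClosure_range ⟨y, hy⟩ ?_
  rw [hb, htop]
  exact AddSubmonoid.mem_top _

/-- If `x_1, …, x_m` is a minimal group generating set of `ℤ^m`, then together with
`x_0 = -(x_1 + ⋯ + x_m)` it is a minimal semigroup (monoid) generating set of `ℤ^m`:
it generates, and no set of at most `m` elements generates `ℤ^m` as a semigroup. -/
theorem stmt12 (m : ℕ) (hm : 1 ≤ m) (x : Fin m → (Fin m → ℤ))
    (hgen : AddSubgroup.closure (Set.range x) = ⊤)
    (hmin : ∀ Y : Finset (Fin m → ℤ),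
      AddSubgroup.closure (Y : Set (Fin m → ℤ)) = ⊤ → m ≤ Y.card) :
    AddSubmonoid.closure (Set.range x ∪ {-(∑ i, x i)}) = ⊤ ∧
    ∀ Y : Finset (Fin m → ℤ),
      AddSubmonoid.closure (Y : Set (Fin m → ℤ)) = ⊤ → m + 1 ≤ Y.card := by
  refine ⟨by rw [AddSubmonoid.closure_range_union_neg_sum, hgen]; rfl, fun Y hY => ?_⟩
  have hYgrp : AddSubgroup.closure (Y : Set (Fin m → ℤ)) = ⊤ := eq_top_iff.mpr fun g _ =>
    AddSubgroup.le_closure_toAddSubmonoid _ (hY ▸ AddSubmonoid.mem_top g)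
  refine (hmin Y hYgrp).lt_of_ne fun hcard => ?_
  refine Finset.addSubmonoidClosure_ne_top_of_card_eq_finrank (R := ℤ)
    (Finset.card_pos.mp (hcard ▸ hm)) ?_ (by rw [← hcard, finrank_fin_fun]) hY
  rw [← Submodule.toAddSubgroup_le, Submodule.span_int_eq_addSubgroupClosure, hYgrp]
  exact le_rfl
end

section
/- Let S be an anti-negative semifield in which every element other than 0_S and 1_S has infinite multiplicative order, and suppose (S*,·) is generated by m elements for some finite m. Then (S*,·) is isomorphic to Z^{m'} for some m' ≤ m−1 viewed as a group; in particular (S*,·) is a finitely generated torsion-free abelian group. -/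
/-!
Torsion-freeness of `(S*,·)` comes straight from the order hypothesis, and a finitely generated
torsion-free abelian group is free, `≅ ℤⁿ`. Since `g₁, …, gₘ` generate `S*` as a monoid, the
inverse of `g₁ ⋯ gₘ` is a word `∏ gᵢ^{cᵢ}`, so `∏ gᵢ^{cᵢ + 1} = 1`: the surjection `ℤᵐ → ℤⁿ`
sending the basis to the generators has a nonzero kernel, and rank–nullity gives `n ≤ m - 1`.
-/

open Module

section AddCommGroup

variable {A : Type*} [AddCommGroup A] {ι : Type*} [Fintype ι] {v : ι → A}

lemma exists_sum_succ_nsmul_eq_zero_of_closure_eq_top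
    (hv : AddSubmonoid.closure (Set.range v) = ⊤) :
    ∃ c : ι → ℕ, ∑ i, (c i + 1) • v i = 0 := by
  have hneg : -∑ i, v i ∈ Submodule.span ℕ (Set.range v) := by
    rw [← Submodule.mem_toAddSubmonoid, Submodule.span_nat_eq_addSubmonoidClosure, hv]
    trivial
  obtain ⟨c, hc⟩ := (Submodule.mem_span_range_iff_exists_fun ℕ).mp hneg
  refine ⟨c, ?_⟩
  simp only [add_smul, one_smul, Finset.sum_add_distrib, hc, neg_add_cancel]

lemma surjective_linearCombination_int_of_closure_eq_top
    (hv : AddSubmonoid.closure (Set.range v) = ⊤) :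
    Function.Surjective (Fintype.linearCombination ℤ v) := by
  rw [← LinearMap.range_eq_top, Fintype.range_linearCombination, eq_top_iff]
  intro x _
  have hle : AddSubmonoid.closure (Set.range v) ≤ (Submodule.span ℤ (Set.range v)).toAddSubmonoid :=
    AddSubmonoid.closure_le.mpr Submodule.subset_span
  exact hle (hv ▸ AddSubmonoid.mem_top x)

lemma finrank_int_le_card_sub_one_of_closure_eq_top
    (hv : AddSubmonoid.closure (Set.range v) = ⊤) :
    finrank ℤ A ≤ Fintype.card ι - 1 := by
  set L := Fintype.linearCombination ℤ v
  have hL := surjective_linearCombination_int_of_closure_eq_top hv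
  have hrank : finrank ℤ A + finrank ℤ L.ker = Fintype.card ι := by
    rw [← (L.quotKerEquivOfSurjective hL).finrank_eq, Submodule.finrank_quotient_add_finrank,
      finrank_fintype_fun_eq_card]
  rcases isEmpty_or_nonempty ι with hι | hι
  · rw [Fintype.card_eq_zero] at hrank ⊢
    omega
  · obtain ⟨c, hc⟩ := exists_sum_succ_nsmul_eq_zero_of_closure_eq_top hv
    have hker : 0 < finrank ℤ L.ker := by
      refine finrank_pos_iff_exists_ne_zero.mpr ⟨⟨fun i => (c i : ℤ) + 1, ?_⟩, ?_⟩
      · simpa [L, Fintype.linearCombination_apply, ← natCast_zsmul] using hc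
      · intro h
        have := congrFun (congrArg Subtype.val h) (Classical.arbitrary ι)
        simp only [Submodule.coe_zero, Pi.zero_apply] at this
        omega
    omega

end AddCommGroup

theorem CommGroup.exists_mulEquiv_multiplicative_fin_int_of_closure_eq_top
    {G : Type*} [CommGroup G] [IsMulTorsionFree G] {m : ℕ} (g : Fin m → G)
    (hg : Submonoid.closure (Set.range g) = ⊤) :
    ∃ n ≤ m - 1, Nonempty (G ≃* Multiplicative (Fin n → ℤ)) := by
  set v : Fin m → Additive G := fun i => Additive.ofMul (g i)
  have hv : AddSubmonoid.closure (Set.range v) = ⊤ := by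
    have h := congrArg Submonoid.toAddSubmonoid hg
    rw [Submonoid.toAddSubmonoid_closure] at h
    exact h
  have : Module.Finite ℤ (Additive G) :=
    .of_surjective _ (surjective_linearCombination_int_of_closure_eq_top hv)
  have : Module.Free ℤ (Additive G) := free_of_finite_type_torsion_free'
  refine ⟨finrank ℤ (Additive G), ?_, ⟨AddEquiv.toMultiplicativeRight ?_⟩⟩
  · simpa using finrank_int_le_card_sub_one_of_closure_eq_top hv
  · exact (finBasis ℤ (Additive G)).equivFun.toAddEquiv

lemma Units.isMulTorsionFree_of_pow_ne_one {M : Type*} [CommMonoidWithZero M]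
    (hord : ∀ x : M, x ≠ 0 → x ≠ 1 → ∀ k : ℕ, 0 < k → x ^ k ≠ 1) : IsMulTorsionFree Mˣ := by
  refine isMulTorsionFree_iff_not_isOfFinOrder.mpr fun u hu hfin => ?_
  obtain ⟨k, hk, hpow⟩ := isOfFinOrder_iff_pow_eq_one.mp hfin
  have hu1 : (u : M) ≠ 1 := fun h => hu (Units.val_eq_one.mp h)
  have : Nontrivial M := nontrivial_of_ne _ _ hu1
  exact hord u u.ne_zero hu1 k hk (by rw [← Units.val_pow_eq_pow_val, hpow, Units.val_one])

theorem stmt13_general (S : Type*) [CommSemiring S]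
    (hord : ∀ x : S, x ≠ 0 → x ≠ 1 → ∀ k : ℕ, 0 < k → x ^ k ≠ 1)
    (m : ℕ) (g : Fin m → Sˣ)
    (hg : Submonoid.closure (Set.range g) = ⊤) :
    ∃ m' ≤ m - 1, Nonempty (Sˣ ≃* Multiplicative (Fin m' → ℤ)) :=
  have := Units.isMulTorsionFree_of_pow_ne_one hord
  CommGroup.exists_mulEquiv_multiplicative_fin_int_of_closure_eq_top g hg

/-- Let `S` be an anti-negative semifield in which every element other than `0` and `1`
has infinite multiplicative order. If `(S*,·)` is generated (as a monoid) by `m`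
elements, then `(S*,·) ≅ ℤ^{m'}` for some `m' ≤ m - 1`; in particular it is a finitely
generated torsion-free abelian group. -/
theorem stmt13 (S : Type*) [CommSemiring S] (hnt : (0 : S) ≠ 1)
    (hsf : ∀ x : S, x ≠ 0 → IsUnit x)
    (hanti : ∀ x y : S, x + y = 0 → x = 0 ∧ y = 0)
    (hord : ∀ x : S, x ≠ 0 → x ≠ 1 → ∀ k : ℕ, 0 < k → x ^ k ≠ 1)
    (m : ℕ) (g : Fin m → Sˣ)
    (hg : Submonoid.closure (Set.range g) = ⊤) :
    ∃ m' ≤ m - 1, Nonempty (Sˣ ≃* Multiplicative (Fin m' → ℤ)) :=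
  stmt13_general S hord m g hg
end

section
/- In M_3(Z_max), for each s ∈ Z the matrix X_s with zero diagonal entries equal to −∞, all off-diagonal entries 0, except the (1,3) entry equal to s, is prime: whenever X_s = AB with A, B ∈ M_3(Z_max), exactly one of A, B is invertible. -/
/-!
Over `ℤ_max` a finite sum vanishes only if every summand does, and there are no zero divisors,
so the Boolean image of a product `A * B` is the relational composite of the Boolean images of
`A` and `B`. The image of `X_s` is the relation `≠` on three points. A short case analysis shows
that if `S ∘ T` is `≠` on three points, then `S` or `T` is the graph of a permutation; a matrix
with such a Boolean image is a diagonal matrix of units times a permutation matrix, hence a unit.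
Both factors cannot be units, because `X_s` is not: `≠ ∘ T` is never the identity relation on
three points.
-/

noncomputable instance : LinearOrderedAddCommMonoidWithTop (WithBot ℤ)ᵒᵈ where
  __ : AddCommMonoid (WithBot ℤ)ᵒᵈ := inferInstance
  __ : LinearOrder (WithBot ℤ)ᵒᵈ := inferInstance
  __ : IsOrderedAddMonoid (WithBot ℤ)ᵒᵈ := inferInstance
  le_top a := bot_le (α := WithBot ℤ) (a := OrderDual.ofDual a)
  top_add' a := WithBot.bot_add (OrderDual.ofDual a)
  isAddLeftRegular_of_ne_top x hx _ _ h := WithBot.add_left_cancel (x := OrderDual.ofDual x) hx h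

/-- The tropical integers `ℤ_max = ℤ ∪ {-∞}` with addition `max` and
multiplication `+`. -/
abbrev Zmax := Tropical (WithBot ℤ)ᵒᵈ

/-- The element of `ℤ_max` corresponding to the integer `z`. -/
noncomputable def tz (z : ℤ) : Zmax := Tropical.trop (OrderDual.toDual (z : WithBot ℤ))

/-- The matrix `X_s`: diagonal entries `-∞`, `(1,3)` entry `s`, all other entries `0`. -/
noncomputable def Xmat (s : ℤ) : Matrix (Fin 3) (Fin 3) Zmax :=
  fun i j => if i = j then 0 else if i = 0 ∧ j = 2 then tz s else 1

instance Tropical.instSubsingletonAddUnits {R : Type*} [LinearOrder R] [OrderTop R] :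
    Subsingleton (AddUnits (Tropical R)) where
  allEq u v := by
    have eq_zero (w : AddUnits (Tropical R)) : (w : Tropical R) = 0 :=
      Tropical.untrop_injective (min_eq_top.mp (congrArg Tropical.untrop w.val_neg)).1
    exact AddUnits.ext ((eq_zero u).trans (eq_zero v).symm)

namespace Zmax

lemma tz_add (a b : ℤ) : tz (a + b) = tz a * tz b := rfl

lemma tz_zero : tz 0 = 1 := rfl

lemma tz_ne_zero (z : ℤ) : tz z ≠ 0 := fun h =>
  WithBot.coe_ne_bot (congrArg (fun x : Zmax => OrderDual.ofDual (Tropical.untrop x)) h)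

instance : Nontrivial Zmax := ⟨⟨tz 0, 0, tz_ne_zero 0⟩⟩

lemma eq_zero_or_exists_tz (a : Zmax) : a = 0 ∨ ∃ z, tz z = a := by
  induction h : OrderDual.ofDual (Tropical.untrop a) using WithBot.recBotCoe with
  | bot => exact Or.inl (Tropical.untrop_injective h)
  | coe z => exact Or.inr ⟨z, Tropical.untrop_injective h.symm⟩

instance : NoZeroDivisors Zmax where
  eq_zero_or_eq_zero_of_mul_eq_zero {a b} h := by
    rcases eq_zero_or_exists_tz a with ha | ⟨x, rfl⟩
    · exact Or.inl ha
    rcases eq_zero_or_exists_tz b with hb | ⟨y, rfl⟩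
    · exact Or.inr hb
    exact absurd (by rw [tz_add]; exact h) (tz_ne_zero (x + y))

lemma isUnit_of_ne_zero {a : Zmax} (ha : a ≠ 0) : IsUnit a := by
  obtain ⟨z, rfl⟩ := (eq_zero_or_exists_tz a).resolve_left ha
  exact IsUnit.of_mul_eq_one (tz (-z)) (by rw [← tz_add, add_neg_cancel, tz_zero])

end Zmax

namespace Matrix

variable {n R : Type*} [Semiring R]

/-- The Boolean image of `A` (`0 ↦ false`, everything else `↦ true`), as a relation. -/
def pattern (A : Matrix n n R) : n → n → Prop := fun i j => A i j ≠ 0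

lemma pattern_mul [Fintype n] [NoZeroDivisors R] [Subsingleton (AddUnits R)]
    (A B : Matrix n n R) :
    (A * B).pattern = Relation.Comp A.pattern B.pattern := by
  ext i j
  simp only [pattern, Relation.Comp, mul_apply, ne_eq, Finset.sum_eq_zero_iff, Finset.mem_univ,
    true_implies, mul_eq_zero, not_forall, not_or]

lemma pattern_one [DecidableEq n] [Nontrivial R] : (1 : Matrix n n R).pattern = Eq := by
  ext i j
  by_cases h : i = j
  · subst h
    simp [pattern]
  · simp [pattern, h, one_apply_ne h]

lemma isUnit_of_eq_zero_of_ne_perm [Fintype n] [DecidableEq n] (A : Matrix n n R)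
    (σ : Equiv.Perm n) (hzero : ∀ i j, σ i ≠ j → A i j = 0)
    (hunit : ∀ i, IsUnit (A i (σ i))) : IsUnit A := by
  have hA : A = diagonal (fun i => A i (σ i)) * σ.permMatrix R := by
    ext i j
    by_cases h : σ i = j
    · simp [diagonal_mul, Equiv.Perm.permMatrix, PEquiv.toMatrix_apply, h]
    · simp [diagonal_mul, Equiv.Perm.permMatrix, PEquiv.toMatrix_apply, h, hzero i j h]
  have hdiag : IsUnit (diagonal fun i => A i (σ i)) :=
    (Pi.isUnit_iff.mpr hunit).map (diagonalRingHom n R)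
  have hperm : IsUnit (σ.permMatrix R) := by
    simpa using (Group.isUnit σ⁻¹).map (permMatrixHom (n := n) (R := R))
  rw [hA]
  exact hdiag.mul hperm

end Matrix

lemma Zmax.isUnit_of_pattern_eq_perm {n : Type*} [Fintype n] [DecidableEq n]
    {A : Matrix n n Zmax} (σ : Equiv.Perm n) (h : ∀ i j, A.pattern i j ↔ σ i = j) :
    IsUnit A :=
  A.isUnit_of_eq_zero_of_ne_perm σ (fun i j hij => by_contra fun h0 => hij ((h i j).mp h0))
    (fun i => Zmax.isUnit_of_ne_zero ((h i (σ i)).mpr rfl))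

lemma pattern_Xmat (s : ℤ) : (Xmat s).pattern = (· ≠ ·) := by
  ext i j
  unfold Matrix.pattern Xmat
  split_ifs with hij
  · simp [hij]
  · simpa [hij] using Zmax.tz_ne_zero s
  · simpa [hij, ← Zmax.tz_zero] using Zmax.tz_ne_zero 0

lemma flip_ne {α : Type*} : flip (· ≠ · : α → α → Prop) = (· ≠ ·) := by
  ext a b
  exact ne_comm

lemma exists_perm_of_comp_eq_ne_of_rightUnique {n : Type*} [Finite n] [Nontrivial n]
    {S T : n → n → Prop} (H : Relation.Comp S T = (· ≠ ·)) (hS : Relator.RightUnique S) :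
    ∃ σ : Equiv.Perm n, ∀ i j, S i j ↔ σ i = j := by
  have hST (i j : n) : (∃ k, S i k ∧ T k j) ↔ i ≠ j := iff_of_eq (congrFun₂ H i j)
  have total (i : n) : ∃ k, S i k := by
    obtain ⟨j, hj⟩ := exists_ne i
    obtain ⟨k, hk, -⟩ := (hST i j).mpr hj.symm
    exact ⟨k, hk⟩
  choose σ hσ using total
  have graph (i j : n) : S i j ↔ σ i = j := ⟨fun h => hS (hσ i) h, fun h => h ▸ hσ i⟩
  have hinj : Function.Injective σ := by
    intro i i' h
    by_contra hii'
    obtain ⟨k, hk, hT⟩ := (hST i i').mpr hii'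
    rw [graph, h] at hk
    exact (hST i' i').mp ⟨k, (graph i' k).mpr hk, hT⟩ rfl
  exact ⟨Equiv.ofBijective σ hinj.bijective_of_finite, graph⟩

lemma Fin3.exists_ne_ne (a b : Fin 3) : ∃ c, c ≠ a ∧ c ≠ b := by
  revert a b; decide

lemma Fin3.eq_of_ne_of_ne {a b c d : Fin 3} (hab : a ≠ b) (hca : c ≠ a) (hcb : c ≠ b)
    (hda : d ≠ a) (hdb : d ≠ b) : c = d := by
  revert a b c d; decide

lemma rightUnique_or_leftUnique_of_comp_eq_ne {S T : Fin 3 → Fin 3 → Prop}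
    (H : Relation.Comp S T = (· ≠ ·)) : Relator.RightUnique S ∨ Relator.LeftUnique T := by
  have hST (i j : Fin 3) : (∃ k, S i k ∧ T k j) ↔ i ≠ j := iff_of_eq (congrFun₂ H i j)
  have no_loop {i k : Fin 3} (hS : S i k) (hT : T k i) : False := (hST i i).mp ⟨k, hS, hT⟩ rfl
  by_contra! ⟨hS, hT⟩
  simp only [Relator.RightUnique, Relator.LeftUnique, not_forall] at hS hT
  obtain ⟨i₀, k₁, k₂, hk₁, hk₂, hk⟩ := hS
  obtain ⟨l₁, l₂, j₀, hl₁, hl₂, hl⟩ := hT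
  -- `T k i₀` rules out `k = k₁, k₂` and `S j₀ k` rules out `k = l₁, l₂`: on three points
  -- this leaves one choice of `k`.
  have col {k m : Fin 3} (hk' : T k i₀) (hm : T m i₀) : k = m :=
    Fin3.eq_of_ne_of_ne hk (fun h => no_loop hk₁ (h ▸ hk')) (fun h => no_loop hk₂ (h ▸ hk'))
      (fun h => no_loop hk₁ (h ▸ hm)) (fun h => no_loop hk₂ (h ▸ hm))
  have row {k m : Fin 3} (hk' : S j₀ k) (hm : S j₀ m) : k = m :=
    Fin3.eq_of_ne_of_ne hl (fun h => no_loop (h ▸ hk') hl₁) (fun h => no_loop (h ▸ hk') hl₂)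
      (fun h => no_loop (h ▸ hm) hl₁) (fun h => no_loop (h ▸ hm) hl₂)
  have hij : i₀ ≠ j₀ := by
    rintro rfl
    exact hk (row hk₁ hk₂)
  obtain ⟨m, hSm, hTm⟩ := (hST j₀ i₀).mpr hij.symm
  obtain ⟨p, hpi, hpj⟩ := Fin3.exists_ne_ne i₀ j₀
  obtain ⟨k, hSp, hTk⟩ := (hST p i₀).mpr hpi
  obtain ⟨k', hSk', hTp⟩ := (hST j₀ p).mpr hpj.symm
  rw [col hTk hTm] at hSp
  rw [row hSk' hSm] at hTp
  exact no_loop hSp hTp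

lemma exists_perm_of_comp_eq_ne {S T : Fin 3 → Fin 3 → Prop}
    (H : Relation.Comp S T = (· ≠ ·)) :
    (∃ σ : Equiv.Perm (Fin 3), ∀ i j, S i j ↔ σ i = j) ∨
      ∃ σ : Equiv.Perm (Fin 3), ∀ i j, T i j ↔ σ i = j := by
  rcases rightUnique_or_leftUnique_of_comp_eq_ne H with hS | hT
  · exact Or.inl (exists_perm_of_comp_eq_ne_of_rightUnique H hS)
  · have H' : Relation.Comp (flip T) (flip S) = (· ≠ ·) := by
      rw [← Relation.flip_comp, H, flip_ne]
    obtain ⟨σ, hσ⟩ := exists_perm_of_comp_eq_ne_of_rightUnique H' hT.flip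
    exact Or.inr ⟨σ.symm, fun i j => by rw [Equiv.symm_apply_eq, eq_comm]; exact hσ j i⟩

lemma comp_ne_ne_eq (T : Fin 3 → Fin 3 → Prop) : Relation.Comp (· ≠ ·) T ≠ Eq := by
  intro H
  have hT (i j : Fin 3) : (∃ k, i ≠ k ∧ T k j) ↔ i = j := iff_of_eq (congrFun₂ H i j)
  obtain ⟨k, -, hk⟩ := (hT 0 0).mpr rfl
  obtain ⟨i, hik, hi0⟩ := Fin3.exists_ne_ne k 0
  exact hi0 ((hT i 0).mp ⟨k, hik, hk⟩)

lemma Xmat_not_isUnit (s : ℤ) : ¬ IsUnit (Xmat s) := by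
  rintro ⟨U, hU⟩
  apply comp_ne_ne_eq (↑U⁻¹ : Matrix (Fin 3) (Fin 3) Zmax).pattern
  rw [← pattern_Xmat s, ← Matrix.pattern_mul, ← hU, U.mul_inv, Matrix.pattern_one]

/-- Each `X_s` is prime in `M_3(ℤ_max)`: it is not a unit, and in any factorization
`X_s = A * B` exactly one of `A`, `B` is a unit. -/
theorem stmt14 (s : ℤ) :
    ¬ IsUnit (Xmat s) ∧
    ∀ A B : Matrix (Fin 3) (Fin 3) Zmax, A * B = Xmat s →
      Xor' (IsUnit A) (IsUnit B) := by
  refine ⟨Xmat_not_isUnit s, fun A B hAB => ?_⟩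
  have not_both (hA : IsUnit A) (hB : IsUnit B) : False :=
    Xmat_not_isUnit s (hAB ▸ hA.mul hB)
  have H : Relation.Comp A.pattern B.pattern = (· ≠ ·) := by
    rw [← Matrix.pattern_mul, hAB, pattern_Xmat]
  rcases exists_perm_of_comp_eq_ne H with ⟨σ, hσ⟩ | ⟨σ, hσ⟩
  · have hA := Zmax.isUnit_of_pattern_eq_perm σ hσ
    exact Or.inl ⟨hA, not_both hA⟩
  · have hB := Zmax.isUnit_of_pattern_eq_perm σ hσ
    exact Or.inr ⟨hB, fun hA => not_both hA hB⟩
end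

section
/- In M_3(Z_max), if X_s and X_t (s, t ∈ Z) are J-related, then t = s or t + s = 0 (i.e., ts = 1 tropically). Consequently, the matrices X_s for s ∈ N_0 lie in pairwise distinct J-classes except for the identification s ↔ −s. -/
/-! If `A * X_s * B = X_t`, the `-∞` diagonal and the finite off-diagonal entries of `X_s` and
`X_t` force every row of `A` and every column of `B` to have exactly one finite entry, in
positions given by a permutation `σ`, so that `X_t i j = a i + X_s (σ i) (σ j) + b j`.
The two cyclic sums `X 0 1 + X 1 2 + X 2 0` and `X 0 2 + X 2 1 + X 1 0` are then both shifted
by `∑ a + ∑ b`, and swapped when `σ` reverses the cyclic order of `Fin 3`. For `X_s` they are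
`0` and `s`, so `t = s` or `t = -s`. -/

namespace Tropical

theorem sum_eq_zero_iff {R ι : Type*} [LinearOrder R] [OrderTop R] {s : Finset ι}
    {f : ι → Tropical R} : ∑ i ∈ s, f i = 0 ↔ ∀ i ∈ s, f i = 0 := by
  simp [← untrop_inj_iff, Finset.untrop_sum', Finset.inf_eq_top_iff]

end Tropical

namespace Matrix

theorem exists_ne_zero_of_mul_apply_ne_zero {l m o α : Type*} [Fintype m]
    [NonUnitalNonAssocSemiring α] {M : Matrix l m α} {N : Matrix m o α} {i : l} {j : o}
    (h : (M * N) i j ≠ 0) : ∃ k, M i k ≠ 0 ∧ N k j ≠ 0 := by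
  obtain ⟨k, -, hk⟩ := Finset.exists_ne_zero_of_sum_ne_zero h
  exact ⟨k, left_ne_zero_of_mul hk, right_ne_zero_of_mul hk⟩

variable {n : Type*} [Fintype n]

def HasOffDiagSupport {α : Type*} [Zero α] (M : Matrix n n α) : Prop :=
  ∀ i j, M i j = 0 ↔ i = j

section Tropical

variable {R : Type*} [LinearOrderedAddCommMonoidWithTop R] [NoZeroDivisors (Tropical R)]
  {A X B Y : Matrix n n (Tropical R)}

theorem eq_of_mul_mul_apply_self_eq_zero (hX : X.HasOffDiagSupport) {j l k : n}
    (hjj : (A * X * B) j j = 0) (hA : A j l ≠ 0) (hB : B k j ≠ 0) : l = k := by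
  simp only [mul_apply, Tropical.sum_eq_zero_iff, Finset.mem_univ, true_implies,
    mul_eq_zero] at hjj
  have hAX : ∀ l, A j l = 0 ∨ X l k = 0 := (hjj k).resolve_right hB
  exact (hX l k).1 ((hAX l).resolve_left hA)

theorem exists_perm_of_mul_mul_eq [Nontrivial n] (hX : X.HasOffDiagSupport)
    (hY : Y.HasOffDiagSupport) (h : A * X * B = Y) :
    ∃ σ : Equiv.Perm n, ∀ i j, Y i j = A i (σ i) * X (σ i) (σ j) * B (σ j) j := by
  have hrow : ∀ i, ∃ l, A i l ≠ 0 := fun i => by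
    obtain ⟨j, hji⟩ := exists_ne i
    have hYij : (A * (X * B)) i j ≠ 0 := by
      rw [← Matrix.mul_assoc, h]; exact fun h0 => hji ((hY i j).1 h0).symm
    obtain ⟨l, hl, -⟩ := exists_ne_zero_of_mul_apply_ne_zero hYij
    exact ⟨l, hl⟩
  have hcol : ∀ j, ∃ k, B k j ≠ 0 := fun j => by
    obtain ⟨i, hij⟩ := exists_ne j
    have hYij : (A * X * B) i j ≠ 0 := by rw [h]; exact fun h0 => hij ((hY i j).1 h0)
    obtain ⟨k, -, hk⟩ := exists_ne_zero_of_mul_apply_ne_zero hYij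
    exact ⟨k, hk⟩
  have hdiag : ∀ j, (A * X * B) j j = 0 := fun j => by rw [h]; exact (hY j j).2 rfl
  choose c hc using hrow
  have hA : ∀ i l, l ≠ c i → A i l = 0 := fun i l hl => by
    by_contra hl'
    obtain ⟨k, hk⟩ := hcol i
    exact hl ((eq_of_mul_mul_apply_self_eq_zero hX (hdiag i) hl' hk).trans
      (eq_of_mul_mul_apply_self_eq_zero hX (hdiag i) (hc i) hk).symm)
  have hB : ∀ k j, k ≠ c j → B k j = 0 := fun k j hk => by
    by_contra hk'
    exact hk (eq_of_mul_mul_apply_self_eq_zero hX (hdiag j) (hc j) hk').symm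
  have hformula : ∀ i j, Y i j = A i (c i) * X (c i) (c j) * B (c j) j := fun i j => by
    rw [← h, mul_apply, Finset.sum_eq_single (c j) (fun k _ hk => by rw [hB k j hk, mul_zero])
      (by simp), mul_apply, Finset.sum_eq_single (c i) (fun l _ hl => by rw [hA i l hl, zero_mul])
      (by simp)]
  have hinj : Function.Injective c := fun i j hcij => by
    by_contra hij
    exact hij ((hY i j).1 (by rw [hformula, hcij, (hX _ _).2 rfl, mul_zero, zero_mul]))
  exact ⟨Equiv.ofBijective c (Finite.injective_iff_bijective.1 hinj), hformula⟩

end Tropical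

section Cycle

variable {α : Type*} [CommMonoid α]

def cycleProd [AddGroup n] (M : Matrix n n α) (k : n) : α := ∏ i, M i (i + k)

theorem cycleProd_eq_of_apply_eq [AddGroup n] {X Y : Matrix n n α} {a b : n → α}
    {σ : Equiv.Perm n} (hY : ∀ i j, Y i j = a i * X (σ i) (σ j) * b j) (k : n) :
    Y.cycleProd k = (∏ i, a i) * (∏ i, b i) * ∏ i, X (σ i) (σ (i + k)) := by
  have hb : ∏ i, b (i + k) = ∏ i, b i := Equiv.prod_comp (Equiv.addRight k) b
  simp only [cycleProd, hY, Finset.prod_mul_distrib, hb]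
  exact mul_right_comm _ _ _

theorem prod_apply_perm_eq_cycleProd [AddGroup n] {X : Matrix n n α} {σ : Equiv.Perm n}
    {k k' : n} (hσ : ∀ i, σ (i + k) = σ i + k') :
    ∏ i, X (σ i) (σ (i + k)) = X.cycleProd k' := by
  simp only [hσ]
  exact Equiv.prod_comp σ fun i => X i (i + k')

theorem _root_.Equiv.Perm.fin_three_apply_add (σ : Equiv.Perm (Fin 3)) :
    (∀ i k, σ (i + k) = σ i + k) ∨ ∀ i k, σ (i + k) = σ i - k := by
  revert σ; decide

theorem exists_cycleProd_fin_three_eq {X Y : Matrix (Fin 3) (Fin 3) α} {a b : Fin 3 → α}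
    {σ : Equiv.Perm (Fin 3)} (hY : ∀ i j, Y i j = a i * X (σ i) (σ j) * b j) :
    ∃ C, (Y.cycleProd 1 = C * X.cycleProd 1 ∧ Y.cycleProd 2 = C * X.cycleProd 2) ∨
      (Y.cycleProd 1 = C * X.cycleProd 2 ∧ Y.cycleProd 2 = C * X.cycleProd 1) := by
  refine ⟨(∏ i, a i) * ∏ i, b i, ?_⟩
  simp only [cycleProd_eq_of_apply_eq hY]
  rcases σ.fin_three_apply_add with h | h
  · exact .inl ⟨congrArg _ (prod_apply_perm_eq_cycleProd (h · 1)),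
      congrArg _ (prod_apply_perm_eq_cycleProd (h · 2))⟩
  · have hneg : ∀ i k, σ (i + k) = σ i + -k := fun i k => (h i k).trans (sub_eq_add_neg _ _)
    exact .inr ⟨congrArg _ (prod_apply_perm_eq_cycleProd (hneg · 1)),
      congrArg _ (prod_apply_perm_eq_cycleProd (hneg · 2))⟩

end Cycle

end Matrix

instance : NoZeroDivisors Zmax :=
  ⟨fun h => (WithBot.add_eq_bot.1 (congrArg Tropical.untrop h)).imp
    (fun h => Tropical.untrop_injective h) (fun h => Tropical.untrop_injective h)⟩

theorem tz_zero : tz 0 = 1 := rfl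

theorem tz_add (a b : ℤ) : tz (a + b) = tz a * tz b := rfl

theorem tz_injective : Function.Injective tz :=
  Tropical.trop_injective.comp (OrderDual.toDual.injective.comp WithBot.coe_injective)

theorem tz_ne_zero (z : ℤ) : tz z ≠ 0 :=
  fun h => WithBot.coe_ne_bot (congrArg Tropical.untrop h)

theorem hasOffDiagSupport_Xmat (s : ℤ) : (Xmat s).HasOffDiagSupport := by
  intro i j
  unfold Xmat
  split_ifs with hij <;> simp [hij, tz_ne_zero, ← tz_zero]

theorem cycleProd_Xmat_one (s : ℤ) : (Xmat s).cycleProd 1 = 1 := by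
  simp [Matrix.cycleProd, Fin.prod_univ_three, Xmat]

theorem cycleProd_Xmat_two (s : ℤ) : (Xmat s).cycleProd 2 = tz s := by
  simp [Matrix.cycleProd, Xmat]

theorem eq_or_add_eq_zero_of_mul_Xmat_mul_eq {s t : ℤ} {A B : Matrix (Fin 3) (Fin 3) Zmax}
    (h : A * Xmat s * B = Xmat t) : t = s ∨ t + s = 0 := by
  obtain ⟨σ, hσ⟩ :=
    Matrix.exists_perm_of_mul_mul_eq (hasOffDiagSupport_Xmat s) (hasOffDiagSupport_Xmat t) h
  obtain ⟨C, ⟨h1, h2⟩ | ⟨h1, h2⟩⟩ := Matrix.exists_cycleProd_fin_three_eq hσ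
  all_goals simp only [cycleProd_Xmat_one, cycleProd_Xmat_two, mul_one] at h1 h2
  · left
    rw [← h1, one_mul] at h2
    exact tz_injective h2
  · right
    apply tz_injective
    rw [tz_add, h2, ← h1, tz_zero]

/-- If `X_s` and `X_t` are J-related in `M_3(ℤ_max)` then `t = s` or `t + s = 0`
(tropically `ts = 1`); consequently, the `X_s` for `s ∈ ℕ` lie in pairwise distinct
J-classes. -/
theorem stmt15 :
    (∀ s t : ℤ,
      ((∃ A B : Matrix (Fin 3) (Fin 3) Zmax, A * Xmat s * B = Xmat t) ∧
       (∃ C D : Matrix (Fin 3) (Fin 3) Zmax, C * Xmat t * D = Xmat s)) →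
      t = s ∨ t + s = 0) ∧
    (∀ s t : ℕ,
      ((∃ A B : Matrix (Fin 3) (Fin 3) Zmax, A * Xmat (s : ℤ) * B = Xmat (t : ℤ)) ∧
       (∃ C D : Matrix (Fin 3) (Fin 3) Zmax, C * Xmat (t : ℤ) * D = Xmat (s : ℤ))) →
      s = t) := by
  refine ⟨fun s t ⟨⟨A, B, h⟩, _⟩ => eq_or_add_eq_zero_of_mul_Xmat_mul_eq h, ?_⟩
  rintro s t ⟨⟨A, B, h⟩, -⟩
  have := eq_or_add_eq_zero_of_mul_Xmat_mul_eq h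
  omega
end

section
/- Let S be an infinite commutative anti-negative semiring with no zero divisors. Then the monoid M_3(S) is not finitely generated. -/
/-!
Over an anti-negative semiring without zero divisors, `(A * B) i j ≠ 0` exactly when row `i` of
`A` and column `j` of `B` have overlapping supports, so zero patterns multiply like Boolean
matrices. For `s ≠ 0` the pattern of `X s` is "zero exactly on the diagonal", and a check on
`3 × 3` patterns shows that a factorisation `X s = A * B` forces `A` or `B` to be monomial with
unit entries: `X s` is irreducible, so it is two-sided associated to one of the generators.
If `X t = U * X s * V`, then `U` and `V` are monomial for one and the same permutation, and the two
oriented 3-cycle products of entries, `1, s` for `X s` and `1, t` for `X t`, differ by a common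
factor; hence `t = s` or `t * s = 1`. So each generator accounts for at most two of the infinitely
many `X s`.
-/

open Matrix

theorem Submonoid.exists_mem_eq_units_mul_mul_units_of_irreducible {M : Type*} [Monoid M]
    {G : Set M} {x : M} (hx : Irreducible x) (hmem : x ∈ Submonoid.closure G) :
    ∃ g ∈ G, ∃ a b : Mˣ, g = a * x * b := by
  induction hmem using Submonoid.closure_induction with
  | mem g hg => exact ⟨g, hg, 1, 1, by simp⟩
  | one => exact absurd isUnit_one hx.not_isUnit
  | mul y z _ _ ihy ihz =>
    rcases hx.isUnit_or_isUnit rfl with ⟨u, rfl⟩ | ⟨w, rfl⟩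
    · obtain ⟨g, hg, a, b, hgz⟩ := ihz ((irreducible_isUnit_mul u.isUnit).mp hx)
      exact ⟨g, hg, a * u⁻¹, b, by simp [hgz, mul_assoc]⟩
    · obtain ⟨g, hg, a, b, hgy⟩ := ihy ((irreducible_mul_isUnit w.isUnit).mp hx)
      exact ⟨g, hg, a, w⁻¹ * b, by simp [hgy, mul_assoc]⟩

theorem Finset.fin_three_exists_eq_singleton_or_of_disjoint {s t : Finset (Fin 3)}
    (hst : Disjoint s t) (hs : s.Nonempty) (ht : t.Nonempty) :
    (∃ a, s = {a}) ∨ ∃ a, t = {a} := by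
  revert s t; decide

theorem fin_three_exists_ne_ne_of_ne {a b : Fin 3} (hab : a ≠ b) : ∃ c, c ≠ a ∧ c ≠ b := by
  revert a b; decide

theorem fin_three_exists_pair_ne_ne (a : Fin 3) : ∃ b c, b ≠ c ∧ b ≠ a ∧ c ≠ a := by
  revert a; decide

theorem Finset.fin_three_forall_eq_singleton_or_forall_eq_singleton
    {u v : Fin 3 → Finset (Fin 3)} (huv : ∀ i j, Disjoint (u i) (v j) ↔ i = j) :
    (∀ i, ∃ a, u i = {a}) ∨ ∀ j, ∃ a, v j = {a} := by
  have hmeet : ∀ {i j}, i ≠ j → ∃ x ∈ u i, x ∈ v j := fun hij ↦ by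
    simpa [Finset.not_disjoint_iff] using (huv _ _).not.mpr hij
  have hsingle : ∀ i, (∃ a, u i = {a}) ∨ ∃ a, v i = {a} := fun i ↦ by
    obtain ⟨j, hj⟩ := exists_ne i
    obtain ⟨x, hx, -⟩ := hmeet hj.symm
    obtain ⟨y, -, hy⟩ := hmeet hj
    exact fin_three_exists_eq_singleton_or_of_disjoint ((huv i i).mpr rfl) ⟨x, hx⟩ ⟨y, hy⟩
  by_contra h
  simp only [not_or, not_forall] at h
  obtain ⟨⟨a, ha⟩, b, hb⟩ := h
  obtain ⟨y, hy⟩ := (hsingle a).resolve_left ha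
  obtain ⟨x, hx⟩ := (hsingle b).resolve_right hb
  have hab : a ≠ b := by
    rintro rfl
    exact hb ⟨y, hy⟩
  obtain ⟨c, hca, hcb⟩ := fin_three_exists_ne_ne_of_ne hab
  obtain ⟨z, hzb, hza⟩ := hmeet hab.symm
  obtain ⟨z₁, hz₁c, hz₁a⟩ := hmeet hca
  obtain ⟨z₂, hz₂b, hz₂c⟩ := hmeet (Ne.symm hcb)
  simp only [hx, hy, Finset.mem_singleton] at hzb hza hz₁a hz₂b
  subst hzb hza hz₁a hz₂b
  exact Finset.disjoint_left.mp ((huv c c).mpr rfl) hz₁c hz₂c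

namespace Matrix

variable {l m n S : Type*} [Fintype m]

def RowsSupportedOn [Zero S] (A : Matrix l m S) (σ : l → m) : Prop :=
  ∀ i k, k ≠ σ i → A i k = 0

def ColsSupportedOn [Zero S] (A : Matrix m n S) (ρ : n → m) : Prop :=
  ∀ k j, k ≠ ρ j → A k j = 0

def SupportIsOffDiag [Zero S] (M : Matrix n n S) : Prop :=
  ∀ i j, M i j = 0 ↔ i = j

theorem SupportIsOffDiag.pairwise_ne_zero [Zero S] {M : Matrix n n S} (hM : M.SupportIsOffDiag) :
    Pairwise fun i j ↦ M i j ≠ 0 :=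
  fun i j hij ↦ (hM i j).not.mpr hij

section Semiring

variable [Semiring S]

theorem RowsSupportedOn.mul_apply {A : Matrix l m S} {σ : l → m} (hA : A.RowsSupportedOn σ)
    (B : Matrix m n S) (i : l) (j : n) : (A * B) i j = A i (σ i) * B (σ i) j :=
  (Matrix.mul_apply).trans <| Fintype.sum_eq_single _ fun k hk ↦ by rw [hA i k hk, zero_mul]

theorem ColsSupportedOn.mul_apply {B : Matrix m n S} {ρ : n → m} (hB : B.ColsSupportedOn ρ)
    (A : Matrix l m S) (i : l) (j : n) : (A * B) i j = A i (ρ j) * B (ρ j) j :=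
  (Matrix.mul_apply).trans <| Fintype.sum_eq_single _ fun k hk ↦ by rw [hB k j hk, mul_zero]

variable [Subsingleton (AddUnits S)] [NoZeroDivisors S]

theorem mul_apply_eq_zero_iff (A : Matrix l m S) (B : Matrix m n S) (i : l) (j : n) :
    (A * B) i j = 0 ↔ ∀ k, A i k = 0 ∨ B k j = 0 := by
  simp [Matrix.mul_apply, Finset.sum_eq_zero_iff]

theorem col_eq_zero_of_mul_apply_eq_zero {X : Matrix m m S} (hX : Pairwise fun i k ↦ X i k ≠ 0)
    {V : Matrix m n S} {i i' : m} (hii' : i ≠ i') {j : n} (hi : (X * V) i j = 0)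
    (hi' : (X * V) i' j = 0) (k : m) : V k j = 0 := by
  rw [mul_apply_eq_zero_iff] at hi hi'
  by_cases hk : i = k
  · subst hk; exact (hi' i).resolve_left (hX hii'.symm)
  · exact (hi k).resolve_left (hX hk)

theorem row_eq_zero_of_mul_apply_eq_zero {X : Matrix m m S} (hX : Pairwise fun i k ↦ X i k ≠ 0)
    {U : Matrix l m S} {j j' : m} (hjj' : j ≠ j') {i : l} (hj : (U * X) i j = 0)
    (hj' : (U * X) i j' = 0) (k : m) : U i k = 0 := by
  rw [mul_apply_eq_zero_iff] at hj hj'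
  by_cases hk : k = j
  · subst hk; exact (hj' k).resolve_right (hX hjj')
  · exact (hj k).resolve_right (hX hk)

theorem exists_rowsSupportedOn_or_colsSupportedOn {A B : Matrix (Fin 3) (Fin 3) S}
    (hAB : (A * B).SupportIsOffDiag) :
    (∃ σ, A.RowsSupportedOn σ) ∨ ∃ ρ, B.ColsSupportedOn ρ := by
  classical
  let u i := Finset.univ.filter (A i · ≠ 0)
  let v j := Finset.univ.filter (B · j ≠ 0)
  have huv : ∀ i j, Disjoint (u i) (v j) ↔ i = j := fun i j ↦ by
    simp only [u, v, Finset.disjoint_filter, ← hAB i j, mul_apply_eq_zero_iff, or_iff_not_imp_left,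
      Finset.mem_univ, true_imp_iff, not_not]
  rcases Finset.fin_three_forall_eq_singleton_or_forall_eq_singleton huv with hu | hv
  · choose σ hσ using hu
    refine .inl ⟨σ, fun i k hk ↦ ?_⟩
    have : k ∉ u i := by simpa [hσ i] using hk
    simpa [u] using this
  · choose ρ hρ using hv
    refine .inr ⟨ρ, fun k j hk ↦ ?_⟩
    have : k ∉ v j := by simpa [hρ j] using hk
    simpa [v] using this

theorem eq_zero_of_colsSupportedOn_mul {X V : Matrix (Fin 3) (Fin 3) S}
    (hX : Pairwise fun i k ↦ X i k ≠ 0) {ρ : Fin 3 → Fin 3} (h : (X * V).ColsSupportedOn ρ) :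
    V = 0 := by
  ext k j
  obtain ⟨i, i', hii', hi, hi'⟩ := fin_three_exists_pair_ne_ne (ρ j)
  exact col_eq_zero_of_mul_apply_eq_zero hX hii' (h i j hi) (h i' j hi') k

theorem eq_zero_of_rowsSupportedOn_mul {U X : Matrix (Fin 3) (Fin 3) S}
    (hX : Pairwise fun i k ↦ X i k ≠ 0) {σ : Fin 3 → Fin 3} (h : (U * X).RowsSupportedOn σ) :
    U = 0 := by
  ext i k
  obtain ⟨j, j', hjj', hj, hj'⟩ := fin_three_exists_pair_ne_ne (σ i)
  exact row_eq_zero_of_mul_apply_eq_zero hX hjj' (h i j hj) (h i j' hj') k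

end Semiring

section CommSemiring

variable [CommSemiring S] [DecidableEq m]

theorem isUnit_of_rowsSupportedOn {A : Matrix m m S} {σ : m → m} (hσ : σ.Injective)
    (hA : A.RowsSupportedOn σ) (hunit : ∀ i, IsUnit (A i (σ i))) : IsUnit A := by
  let e : Equiv.Perm m := Equiv.ofBijective σ (Finite.injective_iff_bijective.mp hσ)
  have hdecomp : A = diagonal (fun i ↦ A i (σ i)) * Equiv.Perm.permMatrix S e := by
    ext i j
    by_cases hj : j = σ i
    · simp [hj, e]
    · simp [hA i j hj, e, Ne.symm hj]
  rw [hdecomp]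
  refine IsUnit.mul ((Pi.isUnit_iff.mpr hunit).map (diagonalRingHom m S)) ?_
  simpa using (Group.isUnit e⁻¹).map (permMatrixHom (n := m) (R := S))

variable [Nontrivial S] [NoZeroDivisors S]

theorem isUnit_of_rowsSupportedOn_of_mul {A B : Matrix m m S} {σ : m → m}
    (hA : A.RowsSupportedOn σ) (hAB : (A * B).SupportIsOffDiag)
    (hone : ∀ i, ∃ j, (A * B) i j = 1) : IsUnit A := by
  have hunit : ∀ i, IsUnit (A i (σ i)) := fun i ↦ by
    obtain ⟨j, hj⟩ := hone i
    exact .of_mul_eq_one _ (by rwa [hA.mul_apply] at hj)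
  refine isUnit_of_rowsSupportedOn (fun i i' he ↦ by_contra fun hne ↦ ?_) hA hunit
  have hoff : (A * B) i i' ≠ 0 := hAB.pairwise_ne_zero hne
  have hdiag := (hAB i' i').mpr rfl
  rw [hA.mul_apply, he] at hoff
  rw [hA.mul_apply, mul_eq_zero] at hdiag
  exact hdiag.elim (hunit i').ne_zero (right_ne_zero_of_mul hoff)

theorem isUnit_of_colsSupportedOn_of_mul {A B : Matrix m m S} {ρ : m → m}
    (hB : B.ColsSupportedOn ρ) (hAB : (A * B).SupportIsOffDiag)
    (hone : ∀ j, ∃ i, (A * B) i j = 1) : IsUnit B := by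
  rw [← isUnit_transpose]
  refine isUnit_of_rowsSupportedOn_of_mul (B := Aᵀ) (fun j k hk ↦ hB k j hk) ?_ ?_
  · rw [← transpose_mul]
    exact fun i j ↦ (hAB j i).trans eq_comm
  · simpa [← transpose_mul] using hone

end CommSemiring

end Matrix

namespace M3

variable {S : Type*} [CommSemiring S]

def X (s : S) : Matrix (Fin 3) (Fin 3) S :=
  !![0, 1, s; 1, 0, 1; 1, 1, 0]

theorem X_cycle_prod (s : S) {a b c : Fin 3} (hab : a ≠ b) (hbc : b ≠ c) (hac : a ≠ c) :
    (X s a b * X s b c * X s c a = 1 ∧ X s b a * X s c b * X s a c = s) ∨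
      (X s a b * X s b c * X s c a = s ∧ X s b a * X s c b * X s a c = 1) := by
  fin_cases a <;> fin_cases b <;> fin_cases c <;> simp_all [X]

theorem exists_X_apply_eq_one_in_row (s : S) (i : Fin 3) : ∃ j, X s i j = 1 := by
  fin_cases i
  exacts [⟨1, rfl⟩, ⟨0, rfl⟩, ⟨0, rfl⟩]

theorem exists_X_apply_eq_one_in_col (s : S) (j : Fin 3) : ∃ i, X s i j = 1 := by
  fin_cases j
  exacts [⟨1, rfl⟩, ⟨0, rfl⟩, ⟨1, rfl⟩]

variable [Nontrivial S]

theorem supportIsOffDiag_X {s : S} (hs : s ≠ 0) : (X s).SupportIsOffDiag := by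
  intro i j
  fin_cases i <;> fin_cases j <;> simp [X, hs]

variable [Subsingleton (AddUnits S)] [NoZeroDivisors S]

theorem not_isUnit_X {s : S} (hs : s ≠ 0) : ¬IsUnit (X s) := by
  intro hu
  obtain ⟨Y, hY⟩ := hu.exists_right_inv
  have hcol : ∀ k, Y k 0 = 0 :=
    col_eq_zero_of_mul_apply_eq_zero (supportIsOffDiag_X hs).pairwise_ne_zero
      (show (1 : Fin 3) ≠ 2 by decide) (by simp [hY]) (by simp [hY])
  have h00 : (X s * Y) 0 0 = 0 := by simp [Matrix.mul_apply, hcol]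
  simp [hY] at h00

theorem irreducible_X {s : S} (hs : s ≠ 0) : Irreducible (X s) := by
  refine ⟨not_isUnit_X hs, fun A B hAB ↦ ?_⟩
  have hP : (A * B).SupportIsOffDiag := hAB ▸ supportIsOffDiag_X hs
  rcases exists_rowsSupportedOn_or_colsSupportedOn hP with ⟨σ, hσ⟩ | ⟨ρ, hρ⟩
  · exact .inl (isUnit_of_rowsSupportedOn_of_mul hσ hP (hAB ▸ exists_X_apply_eq_one_in_row s))
  · exact .inr (isUnit_of_colsSupportedOn_of_mul hρ hP (hAB ▸ exists_X_apply_eq_one_in_col s))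

theorem eq_or_mul_eq_one_of_X_eq_mul_X_mul {s t : S} (hs : s ≠ 0) (ht : t ≠ 0)
    {U V : Matrix (Fin 3) (Fin 3) S} (h : X t = U * X s * V) : t = s ∨ t * s = 1 := by
  have hXs := supportIsOffDiag_X hs
  have hXt := supportIsOffDiag_X ht
  have hXt_ne : X t ≠ 0 := fun h0 ↦
    hXt.pairwise_ne_zero (show (0 : Fin 3) ≠ 1 by decide) (by simp [h0])
  obtain ⟨σ, hσ⟩ : ∃ σ, U.RowsSupportedOn σ := by
    refine (exists_rowsSupportedOn_or_colsSupportedOn (B := X s * V) ?_).resolve_right ?_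
    · rwa [← mul_assoc, ← h]
    · rintro ⟨ρ, hρ⟩
      exact hXt_ne (by rw [h, eq_zero_of_colsSupportedOn_mul hXs.pairwise_ne_zero hρ, mul_zero])
  obtain ⟨ρ, hρ⟩ : ∃ ρ, V.ColsSupportedOn ρ := by
    refine (exists_rowsSupportedOn_or_colsSupportedOn (A := U * X s) ?_).resolve_left ?_
    · rwa [← h]
    · rintro ⟨σ, hσ⟩
      exact hXt_ne <| by
        rw [h, eq_zero_of_rowsSupportedOn_mul hXs.pairwise_ne_zero hσ, zero_mul, zero_mul]
  have key : ∀ i j, X t i j = U i (σ i) * X s (σ i) (ρ j) * V (ρ j) j := fun i j ↦ by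
    rw [h, hρ.mul_apply, hσ.mul_apply]
  have hoff : ∀ i j, i ≠ j → U i (σ i) ≠ 0 ∧ X s (σ i) (ρ j) ≠ 0 ∧ V (ρ j) j ≠ 0 := by
    intro i j hij
    simpa [key, mul_ne_zero_iff, and_assoc] using hXt.pairwise_ne_zero hij
  obtain rfl : σ = ρ := funext fun i ↦ by
    obtain ⟨j, hji⟩ := exists_ne i
    have hii := (hXt i i).mpr rfl
    rw [key, mul_eq_zero, mul_eq_zero, hXs] at hii
    exact (hii.resolve_right (hoff j i hji).2.2).resolve_left (hoff i j hji.symm).1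
  have hσ_ne : ∀ i j, i ≠ j → σ i ≠ σ j := fun i j hij ↦ (hXs _ _).not.mp (hoff i j hij).2.1
  set c := U 0 (σ 0) * U 1 (σ 1) * U 2 (σ 2) * (V (σ 0) 0 * V (σ 1) 1 * V (σ 2) 2)
  have e₁ : 1 = c * (X s (σ 0) (σ 1) * X s (σ 1) (σ 2) * X s (σ 2) (σ 0)) := by
    rw [show (1 : S) = X t 0 1 * X t 1 2 * X t 2 0 by simp [X], key, key, key]; ring
  have e₂ : t = c * (X s (σ 1) (σ 0) * X s (σ 2) (σ 1) * X s (σ 0) (σ 2)) := by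
    rw [show t = X t 1 0 * X t 2 1 * X t 0 2 by simp [X], key, key, key]; ring
  rcases X_cycle_prod s (hσ_ne 0 1 (by decide)) (hσ_ne 1 2 (by decide)) (hσ_ne 0 2 (by decide))
    with ⟨hp, hq⟩ | ⟨hp, hq⟩
  · rw [hp, mul_one] at e₁
    rw [hq, ← e₁, one_mul] at e₂
    exact .inl e₂
  · rw [hp] at e₁
    rw [hq, mul_one] at e₂
    exact .inr (e₂ ▸ e₁.symm)

theorem finite_setOf_X_eq_units_mul_mul_units (g : Matrix (Fin 3) (Fin 3) S) :
    {s : S | s ≠ 0 ∧ ∃ a b : (Matrix (Fin 3) (Fin 3) S)ˣ, g = a * X s * b}.Finite := by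
  by_contra hinf
  obtain ⟨s, hs, a, b, hg⟩ := Set.Infinite.nonempty hinf
  have hinv : {t : S | t * s = 1}.Subsingleton := fun t ht t' ht' ↦
    left_inv_eq_right_inv ht ((mul_comm s t').trans ht')
  refine hinf (((Set.finite_singleton s).union hinv.finite).subset ?_)
  rintro t ⟨ht, a', b', hg'⟩
  apply eq_or_mul_eq_one_of_X_eq_mul_X_mul hs ht (U := ↑(a'⁻¹ * a)) (V := ↑(b * b'⁻¹))
  calc X t = ↑a'⁻¹ * (a' * X t * b') * ↑b'⁻¹ := by simp [mul_assoc]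
    _ = _ := by rw [← hg', hg]; simp [mul_assoc]

end M3

/-- If `S` is an infinite commutative anti-negative semiring with no zero divisors,
then the monoid `M_3(S)` is not finitely generated. -/
theorem stmt16 (S : Type*) [CommSemiring S] [Infinite S]
    (hanti : ∀ x y : S, x + y = 0 → x = 0 ∧ y = 0)
    (hzd : ∀ x y : S, x * y = 0 → x = 0 ∨ y = 0) :
    ¬ ∃ G : Finset (Matrix (Fin 3) (Fin 3) S),
        Submonoid.closure (G : Set (Matrix (Fin 3) (Fin 3) S)) = ⊤ := by
  have : NoZeroDivisors S := ⟨hzd _ _⟩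
  have : Subsingleton (AddUnits S) := Subsingleton.addUnits_of_isAddUnit fun x hx ↦
    let ⟨y, hxy⟩ := hx.exists_neg; (hanti x y hxy).1
  rintro ⟨G, hG⟩
  refine (Set.finite_singleton (0 : S)).infinite_compl <|
    (G.finite_toSet.biUnion fun g _ ↦ M3.finite_setOf_X_eq_units_mul_mul_units g).subset ?_
  intro s hs
  obtain ⟨g, hg, a, b, hgs⟩ := Submonoid.exists_mem_eq_units_mul_mul_units_of_irreducible
    (M3.irreducible_X hs) (hG ▸ Submonoid.mem_top (M3.X s))
  exact Set.mem_biUnion hg ⟨hs, a, b, hgs⟩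
end
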